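/- arXiv:2010.11781 — 4 statements merged into one kernel-verified Lean document; each statement's English description precedes it below -/
import Mathlib

section
/- Fix a commutative ring R and n : ℕ with n ≥ 1. Let C be the free R-module with basis {e_{i,j} | i, j ∈ Fin n, j ≤ i}, with coproduct Δ(e_{i,j}) = Σ_{k : j ≤ k ≤ i} e_{k,j} ⊗ e_{i,k} and counit ε(e_{i,j}) = δ_{i,j}. Let V₁ ⊆ C be the R-span of the basis elements e_{i,0} with i > 0 (the strictly-below-diagonal entries of the first column), and define the R-linear map ρ : V₁ → V₁ ⊗[R] C by ρ(e_{i,0}) = Σ_{k : 1 ≤ k ≤ i} e_{k,0} ⊗ e_{i,k} (the k = 0 term is omitted). Then ρ is a comodule coaction: (ρ ⊗ id_C) ∘ ρ = (id_{V₁} ⊗ Δ) ∘ ρ as maps V₁ → V₁ ⊗[R] C ⊗[R] C, and (id_{V₁} ⊗ ε) ∘ ρ = id_{V₁} after identifying V₁ ⊗[R] R ≅ V₁. -/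
open TensorProduct

/-- Pairs `(i, j)` with `j ≤ i` in `Fin n`: positions of lower triangular matrix entries. -/
def LTIdx (n : ℕ) := {p : Fin n × Fin n // p.2 ≤ p.1}

/-- Indices `i` with `i > 0`: the strictly-below-diagonal entries `e_{i,0}` of the
first column of a lower triangular matrix. -/
def ColIdx (n : ℕ) [NeZero n] := {i : Fin n // 0 < i}

/-!
Both sides of each identity are linear, so it suffices to compare them on the basis vectors
`e_{i,0}`. Expanding, `(ρ ⊗ id) ρ (e_{i,0})` is the sum of `e_{l,0} ⊗ e_{k,l} ⊗ e_{i,k}` over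
`0 < l ≤ k ≤ i` summed over `k` first, and `(id ⊗ Δ) ρ (e_{i,0})` is the same sum with `l` summed
first. For the counit only the diagonal term `k = i` of `ρ (e_{i,0})` survives; it lies in the
range `1 ≤ k ≤ i` because `i > 0`.
-/

open Finset

theorem Finset.mem_Ioc_and_mem_Ioc_iff {α : Type*} [Preorder α] [LocallyFiniteOrder α]
    {a i k l : α} : k ∈ Ioc a i ∧ l ∈ Ioc a k ↔ k ∈ Icc l i ∧ l ∈ Ioc a i := by
  simp only [mem_Ioc, mem_Icc]
  constructor
  · rintro ⟨⟨-, hki⟩, hal, hlk⟩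
    exact ⟨⟨hlk, hki⟩, hal, hlk.trans hki⟩
  · rintro ⟨⟨hlk, hki⟩, hal, -⟩
    exact ⟨⟨hal.trans_le hlk, hki⟩, hal, hlk⟩

section IncidenceBasis

variable (R : Type*) [CommRing R] {n : ℕ}

/-- `ltSingle R i j = e_{i,j}` and `colSingle R k = e_{k,0} ∈ V₁`, extended by `0` off their index
sets so that sums over intervals need no membership proofs. -/
noncomputable def ltSingle (i j : Fin n) : LTIdx n →₀ R :=
  if h : j ≤ i then Finsupp.single (α := LTIdx n) ⟨(i, j), h⟩ 1 else 0

noncomputable def colSingle [NeZero n] (k : Fin n) : ColIdx n →₀ R :=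
  if h : 0 < k then Finsupp.single (α := ColIdx n) ⟨k, h⟩ 1 else 0

variable {R}

theorem ltSingle_of_le {i j : Fin n} (h : j ≤ i) :
    ltSingle R i j = Finsupp.single (α := LTIdx n) ⟨(i, j), h⟩ 1 :=
  dif_pos h

theorem colSingle_of_pos [NeZero n] {k : Fin n} (h : 0 < k) :
    colSingle R k = Finsupp.single (α := ColIdx n) ⟨k, h⟩ 1 :=
  dif_pos h

theorem map_ltSingle {Δ : (LTIdx n →₀ R) →ₗ[R] (LTIdx n →₀ R) ⊗[R] (LTIdx n →₀ R)}
    (hΔ : ∀ s : LTIdx n,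
      Δ (Finsupp.single s 1) =
        ∑ k ∈ (Finset.Icc s.1.2 s.1.1).attach,
          Finsupp.single (⟨(k.1, s.1.2), (Finset.mem_Icc.mp k.2).1⟩ : LTIdx n) (1 : R)
            ⊗ₜ[R]
          Finsupp.single (⟨(s.1.1, k.1), (Finset.mem_Icc.mp k.2).2⟩ : LTIdx n) (1 : R))
    (i j : Fin n) :
    Δ (ltSingle R i j) = ∑ k ∈ Icc j i, ltSingle R k j ⊗ₜ ltSingle R i k := by
  by_cases hji : j ≤ i
  · rw [ltSingle_of_le hji, hΔ ⟨(i, j), hji⟩, ← Finset.sum_attach (Icc j i)]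
    exact sum_congr rfl fun k _ => congr_arg₂ _
      (ltSingle_of_le (mem_Icc.mp k.2).1).symm (ltSingle_of_le (mem_Icc.mp k.2).2).symm
  · simp [ltSingle, hji, Icc_eq_empty hji]

theorem map_colSingle [NeZero n]
    {ρ : (ColIdx n →₀ R) →ₗ[R] (ColIdx n →₀ R) ⊗[R] (LTIdx n →₀ R)}
    (hρ : ∀ i : ColIdx n,
      ρ (Finsupp.single i 1) =
        ∑ k ∈ (Finset.Ioc (0 : Fin n) i.1).attach,
          Finsupp.single (⟨k.1, (Finset.mem_Ioc.mp k.2).1⟩ : ColIdx n) (1 : R)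
            ⊗ₜ[R]
          Finsupp.single (⟨(i.1, k.1), (Finset.mem_Ioc.mp k.2).2⟩ : LTIdx n) (1 : R))
    (i : Fin n) :
    ρ (colSingle R i) = ∑ k ∈ Ioc 0 i, colSingle R k ⊗ₜ ltSingle R i k := by
  by_cases hi : 0 < i
  · rw [colSingle_of_pos hi, hρ ⟨i, hi⟩, ← Finset.sum_attach (Ioc 0 i)]
    exact sum_congr rfl fun k _ => congr_arg₂ _
      (colSingle_of_pos (mem_Ioc.mp k.2).1).symm (ltSingle_of_le (mem_Ioc.mp k.2).2).symm
  · simp [colSingle, hi, Ioc_eq_empty hi]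

theorem counit_ltSingle {ε : (LTIdx n →₀ R) →ₗ[R] R}
    (hε : ∀ s : LTIdx n,
      ε (Finsupp.single s 1) = if s.1.1 = s.1.2 then (1 : R) else 0)
    (i j : Fin n) :
    ε (ltSingle R i j) = if i = j then 1 else 0 := by
  by_cases hji : j ≤ i
  · rw [ltSingle_of_le hji]
    exact hε ⟨(i, j), hji⟩
  · simp [ltSingle, hji, (lt_of_not_ge hji).ne]

variable [NeZero n] {ρ : (ColIdx n →₀ R) →ₗ[R] (ColIdx n →₀ R) ⊗[R] (LTIdx n →₀ R)}

theorem coassoc_colSingle {Δ : (LTIdx n →₀ R) →ₗ[R] (LTIdx n →₀ R) ⊗[R] (LTIdx n →₀ R)}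
    (hρ : ∀ i, ρ (colSingle R i) = ∑ k ∈ Ioc 0 i, colSingle R k ⊗ₜ ltSingle R i k)
    (hΔ : ∀ i j, Δ (ltSingle R i j) = ∑ k ∈ Icc j i, ltSingle R k j ⊗ₜ ltSingle R i k)
    (i : Fin n) :
    TensorProduct.assoc R _ _ _ (TensorProduct.map ρ LinearMap.id (ρ (colSingle R i))) =
      TensorProduct.map LinearMap.id Δ (ρ (colSingle R i)) := by
  simp only [hρ, hΔ, map_sum, map_tmul, LinearMap.id_apply, sum_tmul, tmul_sum, assoc_tmul]
  exact sum_comm' fun _ _ => mem_Ioc_and_mem_Ioc_iff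

theorem counit_colSingle {ε : (LTIdx n →₀ R) →ₗ[R] R}
    (hρ : ∀ i, ρ (colSingle R i) = ∑ k ∈ Ioc 0 i, colSingle R k ⊗ₜ ltSingle R i k)
    (hε : ∀ i j, ε (ltSingle R i j) = if i = j then 1 else 0)
    {i : Fin n} (hi : 0 < i) :
    TensorProduct.rid R _ (TensorProduct.map LinearMap.id ε (ρ (colSingle R i))) =
      colSingle R i := by
  simp only [hρ, hε, map_sum, map_tmul, LinearMap.id_apply, rid_tmul, ite_smul, one_smul,
    zero_smul, sum_ite_eq, mem_Ioc, hi, le_refl, and_self, if_true]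

end IncidenceBasis

/-- Proposition 1 of the paper: the restriction
`ρ(e_{i,0}) = Σ_{1 ≤ k ≤ i} e_{k,0} ⊗ e_{i,k}` of the incidence coproduct
`Δ(e_{i,j}) = Σ_{j ≤ k ≤ i} e_{k,j} ⊗ e_{i,k}` to the span `V₁` of the strictly-below-diagonal
first-column entries is a comodule coaction:
`(ρ ⊗ id) ∘ ρ = (id ⊗ Δ) ∘ ρ` and `(id ⊗ ε) ∘ ρ = id`. -/
theorem first_column_coaction
    (R : Type*) [CommRing R] (n : ℕ) [NeZero n]
    (Δ : (LTIdx n →₀ R) →ₗ[R] (LTIdx n →₀ R) ⊗[R] (LTIdx n →₀ R))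
    (hΔ : ∀ s : LTIdx n,
      Δ (Finsupp.single s 1) =
        ∑ k ∈ (Finset.Icc s.1.2 s.1.1).attach,
          Finsupp.single (⟨(k.1, s.1.2), (Finset.mem_Icc.mp k.2).1⟩ : LTIdx n) (1 : R)
            ⊗ₜ[R]
          Finsupp.single (⟨(s.1.1, k.1), (Finset.mem_Icc.mp k.2).2⟩ : LTIdx n) (1 : R))
    (ε : (LTIdx n →₀ R) →ₗ[R] R)
    (hε : ∀ s : LTIdx n,
      ε (Finsupp.single s 1) = if s.1.1 = s.1.2 then (1 : R) else 0)
    (ρ : (ColIdx n →₀ R) →ₗ[R] (ColIdx n →₀ R) ⊗[R] (LTIdx n →₀ R))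
    (hρ : ∀ i : ColIdx n,
      ρ (Finsupp.single i 1) =
        ∑ k ∈ (Finset.Ioc (0 : Fin n) i.1).attach,
          Finsupp.single (⟨k.1, (Finset.mem_Ioc.mp k.2).1⟩ : ColIdx n) (1 : R)
            ⊗ₜ[R]
          Finsupp.single (⟨(i.1, k.1), (Finset.mem_Ioc.mp k.2).2⟩ : LTIdx n) (1 : R)) :
    ((TensorProduct.assoc R _ _ _).toLinearMap ∘ₗ
        (TensorProduct.map ρ LinearMap.id) ∘ₗ ρ =
      (TensorProduct.map LinearMap.id Δ) ∘ₗ ρ) ∧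
    ((TensorProduct.rid R (ColIdx n →₀ R)).toLinearMap ∘ₗ
        (TensorProduct.map LinearMap.id ε) ∘ₗ ρ = LinearMap.id) := by
  have hbasis : ∀ i : ColIdx n, Finsupp.single i (1 : R) = colSingle R i.1 :=
    fun i => (colSingle_of_pos i.2).symm
  refine ⟨Finsupp.lhom_ext' fun i => LinearMap.ext_ring ?_,
    Finsupp.lhom_ext' fun i => LinearMap.ext_ring ?_⟩
  · simpa only [LinearMap.comp_apply, Finsupp.lsingle_apply, hbasis, LinearEquiv.coe_coe]
      using coassoc_colSingle (map_colSingle hρ) (map_ltSingle hΔ) i.1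
  · simpa only [LinearMap.comp_apply, Finsupp.lsingle_apply, hbasis, LinearEquiv.coe_coe,
      LinearMap.id_apply] using counit_colSingle (map_colSingle hρ) (counit_ltSingle hε) i.2
end

section
/- Fix a commutative ring R and n : ℕ. Let C be the free R-module with basis {e_{i,j} | i, j ∈ Fin n, j ≤ i}, with coproduct Δ(e_{i,j}) = Σ_{k : j ≤ k ≤ i} e_{k,j} ⊗ e_{i,k}. Define the R-linear 'row shift' map m_r : C → C by m_r(e_{i,j}) = e_{i−1,j} if i > 0 and j ≤ i−1, and m_r(e_{i,j}) = 0 otherwise. Then (id_C ⊗ m_r) ∘ Δ = Δ ∘ m_r as maps C → C ⊗[R] C. -/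
open TensorProduct

/-! Both sides are linear, so it suffices to compare them on a basis vector `e_{i,j}`.
For `i = 0` both vanish. For `i > 0`, applying `m_r` to the right factors of
`Δ(e_{i,j}) = Σ_{j ≤ k ≤ i} e_{k,j} ⊗ e_{i,k}` gives `Σ_{j ≤ k ≤ i} e_{k,j} ⊗ e_{i-1,k}`,
whose top term `k = i` vanishes because `e_{i-1,i}` lies above the diagonal; what remains
is `Δ(e_{i-1,j}) = Δ(m_r(e_{i,j}))`. -/

namespace LTIdx

variable (R : Type*) [CommSemiring R] {n : ℕ}

/-- The basis vector `e_{i,j}` indexed by natural numbers, and `0` outside the lower triangle;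
this avoids the dependent indices of `LTIdx n`. -/
noncomputable def entry (i j : ℕ) : LTIdx n →₀ R :=
  if h : j ≤ i ∧ i < n then
    Finsupp.single ⟨(⟨i, h.2⟩, ⟨j, h.1.trans_lt h.2⟩), Fin.mk_le_mk.mpr h.1⟩ 1
  else 0

variable {R}

theorem single_one_eq_entry (s : LTIdx n) :
    Finsupp.single s (1 : R) = entry R s.1.1 s.1.2 := by
  rw [entry, dif_pos ⟨Fin.le_def.mp s.2, s.1.1.2⟩]
  rfl

theorem entry_eq_zero_of_lt {i j : ℕ} (h : i < j) : entry R (n := n) i j = 0 :=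
  dif_neg fun hji => (hji.1.trans_lt h).false

theorem coproduct_apply_entry
    {Δ : (LTIdx n →₀ R) →ₗ[R] (LTIdx n →₀ R) ⊗[R] (LTIdx n →₀ R)}
    (hΔ : ∀ s : LTIdx n,
      Δ (Finsupp.single s 1) =
        ∑ k ∈ (Finset.Icc s.1.2 s.1.1).attach,
          Finsupp.single (⟨(k.1, s.1.2), (Finset.mem_Icc.mp k.2).1⟩ : LTIdx n) (1 : R)
            ⊗ₜ[R]
          Finsupp.single (⟨(s.1.1, k.1), (Finset.mem_Icc.mp k.2).2⟩ : LTIdx n) (1 : R))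
    {i j : ℕ} (hi : i < n) :
    Δ (entry R i j) = ∑ k ∈ Finset.Icc j i, entry R k j ⊗ₜ[R] entry R i k := by
  rcases le_or_gt j i with hji | hij
  · have hj : j < n := hji.trans_lt hi
    -- `hΔ` mentions the unfolded subtype rather than `LTIdx n`, so it cannot be used by `rw`.
    calc Δ (entry R i j)
        = ∑ k ∈ (Finset.Icc (⟨j, hj⟩ : Fin n) ⟨i, hi⟩).attach,
            entry R k j ⊗ₜ[R] entry R i k :=
          (congrArg Δ (single_one_eq_entry ⟨(⟨i, hi⟩, ⟨j, hj⟩), Fin.mk_le_mk.mpr hji⟩)).symm.trans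
            ((hΔ _).trans (Finset.sum_congr rfl fun _ _ =>
              congrArg₂ (· ⊗ₜ[R] ·) (single_one_eq_entry _) (single_one_eq_entry _)))
      _ = ∑ k ∈ Finset.Icc (⟨j, hj⟩ : Fin n) ⟨i, hi⟩, entry R k j ⊗ₜ[R] entry R i k :=
          Finset.sum_attach _ fun k : Fin n => entry R k j ⊗ₜ[R] entry R i k
      _ = ∑ k ∈ Finset.Icc j i, entry R k j ⊗ₜ[R] entry R i k := by
          rw [← Fin.map_valEmbedding_Icc ⟨j, hj⟩ ⟨i, hi⟩, Finset.sum_map]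
          rfl
  · rw [entry_eq_zero_of_lt hij, map_zero, Finset.Icc_eq_empty_of_lt hij, Finset.sum_empty]

theorem row_shift_apply_entry
    {mr : (LTIdx n →₀ R) →ₗ[R] (LTIdx n →₀ R)}
    (hmr : ∀ s : LTIdx n,
      mr (Finsupp.single s 1) =
        if h : 0 < (s.1.1 : ℕ) ∧ (s.1.2 : ℕ) ≤ (s.1.1 : ℕ) - 1 then
          Finsupp.single
            (⟨(⟨(s.1.1 : ℕ) - 1, (Nat.sub_le _ 1).trans_lt s.1.1.isLt⟩, s.1.2),
              Fin.le_def.mpr h.2⟩ : LTIdx n) (1 : R)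
        else 0)
    {i : ℕ} (hi : i < n) (j : ℕ) :
    mr (entry R i j) = if 0 < i then entry R (i - 1) j else 0 := by
  rcases le_or_gt j i with hji | hij
  · have hj : j < n := hji.trans_lt hi
    rw [← single_one_eq_entry ⟨(⟨i, hi⟩, ⟨j, hj⟩), Fin.mk_le_mk.mpr hji⟩]
    refine (hmr _).trans ?_
    split_ifs with hshift hpos hpos
    · exact single_one_eq_entry _
    · exact absurd hshift.1 hpos
    · exact (entry_eq_zero_of_lt (by dsimp only at hshift; omega)).symm
    · rfl
  · rw [entry_eq_zero_of_lt hij, map_zero]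
    split_ifs
    · exact (entry_eq_zero_of_lt (by omega)).symm
    · rfl

end LTIdx

/-- First part of Proposition 2: the row shift `m_r(e_{i,j}) = e_{i-1,j}` (zero if the shifted
entry leaves the lower triangle) intertwines the incidence coproduct
`Δ(e_{i,j}) = Σ_{j ≤ k ≤ i} e_{k,j} ⊗ e_{i,k}` via `(id ⊗ m_r) ∘ Δ = Δ ∘ m_r`. -/
theorem row_shift_intertwines_coproduct
    (R : Type*) [CommRing R] (n : ℕ)
    (Δ : (LTIdx n →₀ R) →ₗ[R] (LTIdx n →₀ R) ⊗[R] (LTIdx n →₀ R))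
    (hΔ : ∀ s : LTIdx n,
      Δ (Finsupp.single s 1) =
        ∑ k ∈ (Finset.Icc s.1.2 s.1.1).attach,
          Finsupp.single (⟨(k.1, s.1.2), (Finset.mem_Icc.mp k.2).1⟩ : LTIdx n) (1 : R)
            ⊗ₜ[R]
          Finsupp.single (⟨(s.1.1, k.1), (Finset.mem_Icc.mp k.2).2⟩ : LTIdx n) (1 : R))
    (mr : (LTIdx n →₀ R) →ₗ[R] (LTIdx n →₀ R))
    (hmr : ∀ s : LTIdx n,
      mr (Finsupp.single s 1) =
        if h : 0 < (s.1.1 : ℕ) ∧ (s.1.2 : ℕ) ≤ (s.1.1 : ℕ) - 1 then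
          Finsupp.single
            (⟨(⟨(s.1.1 : ℕ) - 1, by have := s.1.1.isLt; omega⟩, s.1.2),
              by rw [Fin.le_def]; exact h.2⟩ : LTIdx n) (1 : R)
        else 0) :
    (TensorProduct.map LinearMap.id mr) ∘ₗ Δ = Δ ∘ₗ mr := by
  refine Finsupp.lhom_ext' fun s => LinearMap.ext_ring ?_
  simp only [LinearMap.comp_apply, Finsupp.lsingle_apply]
  rw [LTIdx.single_one_eq_entry]
  obtain ⟨⟨⟨i, hi⟩, ⟨j, hj⟩⟩, hji⟩ := s
  dsimp only
  rw [LTIdx.coproduct_apply_entry hΔ hi, map_sum, LTIdx.row_shift_apply_entry hmr hi]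
  simp only [map_tmul, LinearMap.id_apply, LTIdx.row_shift_apply_entry hmr hi]
  cases i with
  | zero => simp only [lt_self_iff_false, if_false, tmul_zero, Finset.sum_const_zero, map_zero]
  | succ i =>
    simp only [Nat.succ_pos, if_true, Nat.add_sub_cancel]
    rw [LTIdx.coproduct_apply_entry hΔ (Nat.lt_of_succ_lt hi),
      Finset.sum_Icc_succ_top (Fin.mk_le_mk.mp hji),
      LTIdx.entry_eq_zero_of_lt (Nat.lt_succ_self i), tmul_zero, add_zero]
end

section
/- Fix a commutative ring R and n : ℕ. Let C be the free R-module with basis {e_{a,b} | a, b ∈ Fin n, b ≤ a}, with coproduct Δ(e_{a,b}) = Σ_{k : b ≤ k ≤ a} e_{k,b} ⊗ e_{a,k}. For any fixed j₀ ≤ i₀ in Fin n, let S ⊆ C be the R-span of {e_{a,b} | j₀ ≤ b ≤ a ≤ i₀}. Then S is a subcoalgebra: for every basis element e_{a,b} with j₀ ≤ b ≤ a ≤ i₀, Δ(e_{a,b}) lies in the image of S ⊗[R] S in C ⊗[R] C; moreover, under the reindexing k ↦ k − j₀ identifying the interval [j₀, i₀] with Fin (i₀ − j₀ + 1), the restriction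 of Δ to S coincides with the analogous incidence coproduct on the free R-module over {(a,b) ∈ Fin (i₀−j₀+1)² | b ≤ a}. -/
open TensorProduct

/-! Every tensor factor `e_{[b,k]}`, `e_{[k,a]}` of `Δ e_{[b,a]}` indexes a subinterval of `[b,a]`,
so it lies in `S` as soon as `[b,a] ⊆ [j₀,i₀]`. An order embedding with order-convex range maps
`Icc b a` bijectively onto `Icc (e b) (e a)`, hence carries the incidence coproduct of the source
term by term onto that of the target; the shift `k ↦ k + j₀` is such an embedding. -/

open Finset

-- `(a, b)` with `b ≤ a` stands for the interval `[b, a]`.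
abbrev IncidenceIdx (α : Type*) [Preorder α] := {p : α × α // p.2 ≤ p.1}

def IncidenceIdx.map {α β : Type*} [Preorder α] [Preorder β] (e : α ↪o β) (s : IncidenceIdx α) :
    IncidenceIdx β :=
  ⟨(e s.1.1, e s.1.2), e.monotone s.2⟩

theorem Finset.sum_attach_Icc_orderEmbedding {α β M : Type*} [Preorder α] [LocallyFiniteOrder α]
    [Preorder β] [LocallyFiniteOrder β] [AddCommMonoid M] (e : α ↪o β)
    (he : (Set.range e).OrdConnected) (x y : α) (g : ∀ k, k ∈ Icc (e x) (e y) → M) :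
    ∑ k ∈ (Icc (e x) (e y)).attach, g k.1 k.2 =
      ∑ k ∈ (Icc x y).attach, g (e k.1) (mem_Icc.mpr (e.monotone.mapsTo_Icc (mem_Icc.mp k.2))) := by
  symm
  refine sum_bij (fun k _ => ⟨e k.1, mem_Icc.mpr (e.monotone.mapsTo_Icc (mem_Icc.mp k.2))⟩)
    (fun _ _ => mem_attach _ _)
    (fun k₁ _ k₂ _ h => Subtype.ext (e.injective (congrArg Subtype.val h))) ?_ (fun _ _ => rfl)
  rintro ⟨k, hk⟩ -
  obtain ⟨k', rfl⟩ : k ∈ Set.range e := he.out ⟨x, rfl⟩ ⟨y, rfl⟩ (by simpa using hk)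
  exact ⟨⟨k', by simpa using hk⟩, mem_attach _ _, rfl⟩

section IncidenceCoalgebra

variable {R : Type*} [CommSemiring R] {α β : Type*} [Preorder α] [Preorder β]

variable (R) in
noncomputable def subintervalSpan (j i : α) : Submodule R (IncidenceIdx α →₀ R) :=
  Submodule.span R {x | ∃ s : IncidenceIdx α, (j ≤ s.1.2 ∧ s.1.1 ≤ i) ∧ x = Finsupp.single s 1}

theorem single_mem_subintervalSpan {j i : α} {s : IncidenceIdx α} (hj : j ≤ s.1.2)
    (hi : s.1.1 ≤ i) : Finsupp.single s 1 ∈ subintervalSpan R j i :=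
  Submodule.subset_span ⟨s, ⟨hj, hi⟩, rfl⟩

variable [LocallyFiniteOrder α] [LocallyFiniteOrder β]

def IsIncidenceCoprod
    (Δ : (IncidenceIdx α →₀ R) →ₗ[R] (IncidenceIdx α →₀ R) ⊗[R] (IncidenceIdx α →₀ R)) : Prop :=
  ∀ s : IncidenceIdx α, Δ (Finsupp.single s 1) =
    ∑ k ∈ (Icc s.1.2 s.1.1).attach,
      Finsupp.single (⟨(k.1, s.1.2), (mem_Icc.mp k.2).1⟩ : IncidenceIdx α) (1 : R) ⊗ₜ[R]
        Finsupp.single (⟨(s.1.1, k.1), (mem_Icc.mp k.2).2⟩ : IncidenceIdx α) (1 : R)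

theorem IsIncidenceCoprod.apply_single_mem_range_mapIncl
    {Δ : (IncidenceIdx α →₀ R) →ₗ[R] (IncidenceIdx α →₀ R) ⊗[R] (IncidenceIdx α →₀ R)}
    (hΔ : IsIncidenceCoprod Δ) {j i : α} {s : IncidenceIdx α} (hj : j ≤ s.1.2)
    (hi : s.1.1 ≤ i) :
    Δ (Finsupp.single s 1) ∈
      LinearMap.range (mapIncl (subintervalSpan R j i) (subintervalSpan R j i)) := by
  rw [hΔ s, TensorProduct.range_mapIncl]
  refine Submodule.sum_mem _ fun k _ => Submodule.apply_mem_map₂ _ ?_ ?_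
  · exact single_mem_subintervalSpan hj ((mem_Icc.mp k.2).2.trans hi)
  · exact single_mem_subintervalSpan (hj.trans (mem_Icc.mp k.2).1) hi

theorem IsIncidenceCoprod.comp_eq_map_comp
    {Δ : (IncidenceIdx β →₀ R) →ₗ[R] (IncidenceIdx β →₀ R) ⊗[R] (IncidenceIdx β →₀ R)}
    {Δ' : (IncidenceIdx α →₀ R) →ₗ[R] (IncidenceIdx α →₀ R) ⊗[R] (IncidenceIdx α →₀ R)}
    (hΔ : IsIncidenceCoprod Δ) (hΔ' : IsIncidenceCoprod Δ') (e : α ↪o β)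
    (he : (Set.range e).OrdConnected) {φ : (IncidenceIdx α →₀ R) →ₗ[R] (IncidenceIdx β →₀ R)}
    (hφ : ∀ t, φ (Finsupp.single t 1) = Finsupp.single (t.map e) 1) :
    Δ ∘ₗ φ = map φ φ ∘ₗ Δ' := by
  refine Finsupp.lhom_ext' fun t => LinearMap.ext_ring ?_
  simp only [LinearMap.comp_apply, Finsupp.lsingle_apply]
  rw [hφ, hΔ, hΔ', map_sum]
  simp only [map_tmul, hφ]
  exact sum_attach_Icc_orderEmbedding e he t.1.2 t.1.1 fun k hk =>
    Finsupp.single (⟨(k, e t.1.2), (mem_Icc.mp hk).1⟩ : IncidenceIdx β) (1 : R) ⊗ₜ[R]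
      Finsupp.single (⟨(e t.1.1, k), (mem_Icc.mp hk).2⟩ : IncidenceIdx β) (1 : R)

end IncidenceCoalgebra

theorem Fin.ordConnected_range_addNatOrderEmb_trans_castLEOrderEmb {m n : ℕ} (j : ℕ)
    (h : m + j ≤ n) :
    (Set.range ((Fin.addNatOrderEmb j).trans (Fin.castLEOrderEmb h))).OrdConnected := by
  refine ⟨?_⟩
  rintro _ ⟨x, rfl⟩ _ ⟨y, rfl⟩ k ⟨hxk, hky⟩
  have hxk' : (x : ℕ) + j ≤ k := hxk
  have hky' : (k : ℕ) ≤ y + j := hky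
  exact ⟨⟨k - j, by omega⟩, Fin.ext (show (k : ℕ) - j + j = k by omega)⟩

/-- For any fixed `j₀ ≤ i₀` in `Fin n`, the span `S` of the basis elements `e_{a,b}` with
`j₀ ≤ b ≤ a ≤ i₀` is a subcoalgebra of the incidence coalgebra of lower triangular matrix
entries: `Δ(e_{a,b})` lies in the image of `S ⊗ S`; moreover, under the reindexing
`k ↦ k - j₀` identifying `[j₀, i₀]` with `Fin (i₀ - j₀ + 1)`, the restriction of `Δ` to `S`
coincides with the analogous incidence coproduct `Δ'` on the smaller matrix. -/
theorem lower_triangular_subcoalgebra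
    (R : Type*) [CommRing R] (n : ℕ) (j₀ i₀ : Fin n) (hji : j₀ ≤ i₀)
    (Δ : (LTIdx n →₀ R) →ₗ[R] (LTIdx n →₀ R) ⊗[R] (LTIdx n →₀ R))
    (hΔ : ∀ s : LTIdx n,
      Δ (Finsupp.single s 1) =
        ∑ k ∈ (Finset.Icc s.1.2 s.1.1).attach,
          Finsupp.single (⟨(k.1, s.1.2), (Finset.mem_Icc.mp k.2).1⟩ : LTIdx n) (1 : R)
            ⊗ₜ[R]
          Finsupp.single (⟨(s.1.1, k.1), (Finset.mem_Icc.mp k.2).2⟩ : LTIdx n) (1 : R))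
    (Δ' : (LTIdx ((i₀ : ℕ) - (j₀ : ℕ) + 1) →₀ R) →ₗ[R]
        (LTIdx ((i₀ : ℕ) - (j₀ : ℕ) + 1) →₀ R) ⊗[R] (LTIdx ((i₀ : ℕ) - (j₀ : ℕ) + 1) →₀ R))
    (hΔ' : ∀ s : LTIdx ((i₀ : ℕ) - (j₀ : ℕ) + 1),
      Δ' (Finsupp.single s 1) =
        ∑ k ∈ (Finset.Icc s.1.2 s.1.1).attach,
          Finsupp.single
            (⟨(k.1, s.1.2), (Finset.mem_Icc.mp k.2).1⟩ : LTIdx ((i₀ : ℕ) - (j₀ : ℕ) + 1)) (1 : R)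
            ⊗ₜ[R]
          Finsupp.single
            (⟨(s.1.1, k.1), (Finset.mem_Icc.mp k.2).2⟩ : LTIdx ((i₀ : ℕ) - (j₀ : ℕ) + 1)) (1 : R))
    (φ : (LTIdx ((i₀ : ℕ) - (j₀ : ℕ) + 1) →₀ R) →ₗ[R] (LTIdx n →₀ R))
    (hφ : ∀ t : LTIdx ((i₀ : ℕ) - (j₀ : ℕ) + 1),
      φ (Finsupp.single t 1) =
        Finsupp.single
          (⟨(⟨(t.1.1 : ℕ) + (j₀ : ℕ), by
                have h1 := t.1.1.isLt
                have h2 := i₀.isLt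
                have h3 : (j₀ : ℕ) ≤ (i₀ : ℕ) := hji
                omega⟩,
             ⟨(t.1.2 : ℕ) + (j₀ : ℕ), by
                have h1 := t.1.2.isLt
                have h2 := i₀.isLt
                have h3 : (j₀ : ℕ) ≤ (i₀ : ℕ) := hji
                omega⟩),
            by
              rw [Fin.le_def]
              have h4 : (t.1.2 : ℕ) ≤ (t.1.1 : ℕ) := t.2
              simpa using Nat.add_le_add_right h4 (j₀ : ℕ)⟩ : LTIdx n) (1 : R)) :
    (∀ s : LTIdx n, j₀ ≤ s.1.2 → s.1.1 ≤ i₀ →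
      Δ (Finsupp.single s 1) ∈ LinearMap.range (TensorProduct.mapIncl
        (Submodule.span R
          {x : LTIdx n →₀ R | ∃ s' : LTIdx n,
            (j₀ ≤ s'.1.2 ∧ s'.1.1 ≤ i₀) ∧ x = Finsupp.single s' 1})
        (Submodule.span R
          {x : LTIdx n →₀ R | ∃ s' : LTIdx n,
            (j₀ ≤ s'.1.2 ∧ s'.1.1 ≤ i₀) ∧ x = Finsupp.single s' 1}))) ∧
    Δ ∘ₗ φ = (TensorProduct.map φ φ) ∘ₗ Δ' := by
  have hlen : (i₀ : ℕ) - j₀ + 1 + j₀ ≤ n := by omega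
  refine ⟨fun s hj hi => IsIncidenceCoprod.apply_single_mem_range_mapIncl hΔ hj hi, ?_⟩
  exact IsIncidenceCoprod.comp_eq_map_comp hΔ hΔ'
    ((Fin.addNatOrderEmb j₀).trans (Fin.castLEOrderEmb hlen))
    (Fin.ordConnected_range_addNatOrderEmb_trans_castLEOrderEmb j₀ hlen) hφ
end

section
/- Let α be a type, R a commutative ring, and W the free R-module with basis List α × Multiset α × Multiset α. Define R-linear maps d₀, d₁ : W → W on basis elements by d₀(w, A, B) = Σ_{j=0}^{|w|−1} (−1)^j · (w with its j-th entry deleted, A + {w_j}, B) and d₁(w, A, B) = Σ_{j=0}^{|w|−1} (−1)^j · (w with its j-th entry deleted, A, B + {w_j}), and set d = d₀ + d₁. Then d ∘ d = 0; equivalently, d₀ ∘ d₁ + d₁ ∘ d₀ = 0. -/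
namespace CubicalAux

variable {α : Type*}

def sgn (R : Type*) [CommRing R] (p q : ℕ) : R :=
  if p < q then -(-1 : R) ^ (p + q) else if q < p then (-1 : R) ^ (p + q) else 0

lemma sgn_self (R : Type*) [CommRing R] (p : ℕ) : sgn R p p = 0 := by simp [sgn]

lemma sgn_add_swap (R : Type*) [CommRing R] (p q : ℕ) : sgn R p q + sgn R q p = 0 := by
  unfold sgn
  split_ifs <;> first | omega | ring

lemma eraseIdx_eraseIdx (l : List α) (p q : ℕ) (h : p ≤ q) :
    (l.eraseIdx p).eraseIdx q = (l.eraseIdx (q + 1)).eraseIdx p := by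
  induction l generalizing p q with
  | nil => simp
  | cons a t ih =>
    cases p with
    | zero => simp
    | succ p =>
      cases q with
      | zero => omega
      | succ q => simp [ih p q (by omega)]

def del2 (l : List α) (p q : ℕ) : List α := (l.eraseIdx (max p q)).eraseIdx (min p q)

lemma del2_comm (l : List α) (p q : ℕ) : del2 l p q = del2 l q p := by
  simp [del2, max_comm, min_comm]

lemma getElem_eraseIdx_of_lt (l : List α) (j i : ℕ) (h : i < j)
    (hi : i < (l.eraseIdx j).length) (hi' : i < l.length) :
    (l.eraseIdx j)[i] = l[i] := by
  induction l generalizing i j with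
  | nil => simp at hi'
  | cons a t ih =>
    cases j with
    | zero => omega
    | succ j =>
      cases i with
      | zero => simp
      | succ i =>
        simp only [List.eraseIdx_cons_succ, List.getElem_cons_succ]
        exact ih j i (by omega) (by simpa using hi) (by simpa using hi')

lemma getElem_eraseIdx_of_ge (l : List α) (j i : ℕ) (h : j ≤ i)
    (hi : i < (l.eraseIdx j).length) (hi' : i + 1 < l.length) :
    (l.eraseIdx j)[i] = l[i + 1] := by
  induction l generalizing i j with
  | nil => simp at hi'
  | cons a t ih =>
    cases j with
    | zero => simp
    | succ j =>
      cases i with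
      | zero => omega
      | succ i =>
        simp only [List.eraseIdx_cons_succ, List.getElem_cons_succ]
        exact ih j i (by omega) (by simpa using hi) (by simpa using hi')

lemma val_succAbove {n : ℕ} (j : Fin (n + 1)) (i : Fin n) :
    (j.succAbove i : ℕ) = if (i : ℕ) < (j : ℕ) then (i : ℕ) else (i : ℕ) + 1 := by
  rcases lt_or_ge (Fin.castSucc i) j with h | h
  · rw [Fin.succAbove_of_castSucc_lt _ _ h, if_pos (by simpa [Fin.lt_def] using h)]
    simp
  · rw [Fin.succAbove_of_le_castSucc _ _ h, if_neg (by simp [Fin.le_def] at h; omega)]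
    simp

section
variable {R : Type*} [CommRing R]

noncomputable def Tfun (R : Type*) [CommRing R] (u v : α → Multiset α × Multiset α → Multiset α × Multiset α)
    (a : α) (w : List α) (m : Multiset α × Multiset α) (j q : ℕ) :
    (List α × Multiset α × Multiset α) →₀ R :=
  Finsupp.single (del2 w j q, u ((w[q]?).getD a) (v ((w[j]?).getD a) m)) (sgn R j q)

lemma comp_single
    (u v : α → Multiset α × Multiset α → Multiset α × Multiset α)
    (du dv : ((List α × Multiset α × Multiset α) →₀ R) →ₗ[R]
      ((List α × Multiset α × Multiset α) →₀ R))
    (hdu : ∀ s : List α × Multiset α × Multiset α,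
      du (Finsupp.single s 1) =
        ∑ j : Fin s.1.length,
          Finsupp.single (s.1.eraseIdx j, u (s.1.get j) s.2) ((-1 : R) ^ (j : ℕ)))
    (hdv : ∀ s : List α × Multiset α × Multiset α,
      dv (Finsupp.single s 1) =
        ∑ j : Fin s.1.length,
          Finsupp.single (s.1.eraseIdx j, v (s.1.get j) s.2) ((-1 : R) ^ (j : ℕ)))
    (w : List α) (m : Multiset α × Multiset α) :
    du (dv (Finsupp.single (w, m) 1)) =
      ∑ p : Fin w.length × Fin w.length,
        Finsupp.single (del2 w p.1 p.2, u (w.get p.2) (v (w.get p.1) m))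
          (sgn R p.1 p.2) := by
  cases w with
  | nil => rw [hdv]; simp
  | cons a t =>
    set w := a :: t with hw
    have key : ∀ (x : List α × Multiset α × Multiset α) (c : R),
        du (Finsupp.single x c) = c • du (Finsupp.single x 1) := by
      intro x c
      rw [← map_smul, Finsupp.smul_single', mul_one]
    have step1 : du (dv (Finsupp.single (w, m) 1)) =
        ∑ j : Fin w.length, ∑ q : Fin w.length, Tfun R u v a w m j q := by
      rw [hdv, map_sum]
      refine Finset.sum_congr rfl fun j _ => ?_
      rw [key, hdu]
      have hjlt : (j : ℕ) < w.length := j.isLt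
      have hwl : w.length = t.length + 1 := rfl
      have hlen : ((w.eraseIdx (j : ℕ)).length) = t.length := by
        rw [List.length_eraseIdx_of_lt hjlt, hwl]
        omega
      rw [Finset.smul_sum]
      have hterm : ∀ i : Fin ((w.eraseIdx (j : ℕ)).length),
          ((-1 : R) ^ (j : ℕ)) • Finsupp.single
            ((w.eraseIdx (j : ℕ)).eraseIdx (i : ℕ),
              u ((w.eraseIdx (j : ℕ)).get i) (v (w.get j) m)) ((-1 : R) ^ (i : ℕ))
          = Tfun R u v a w m (j : ℕ) (if (i : ℕ) < (j : ℕ) then (i : ℕ) else (i : ℕ) + 1) := by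
        intro i
        have hiw : (i : ℕ) < (w.eraseIdx (j : ℕ)).length := i.isLt
        rw [Finsupp.smul_single', ← pow_add]
        have hj' : (w[(j : ℕ)]?).getD a = w.get j := by
          rw [List.getElem?_eq_getElem hjlt]; rfl
        by_cases hij : (i : ℕ) < (j : ℕ)
        · rw [if_pos hij]
          have hiw' : (i : ℕ) < w.length := lt_of_lt_of_le hiw (List.length_eraseIdx_le _ _)
          have h1 : (w.eraseIdx (j : ℕ)).eraseIdx (i : ℕ) = del2 w (j : ℕ) (i : ℕ) := by
            rw [del2, Nat.max_eq_left hij.le, Nat.min_eq_right hij.le]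
          have h2 : (w.eraseIdx (j : ℕ)).get i = (w[(i : ℕ)]?).getD a := by
            rw [List.get_eq_getElem, getElem_eraseIdx_of_lt w _ _ hij hiw hiw',
              List.getElem?_eq_getElem hiw']
            rfl
          have h3 : (-1 : R) ^ ((j : ℕ) + (i : ℕ)) = sgn R (j : ℕ) (i : ℕ) := by
            rw [sgn, if_neg (show ¬ ((j : ℕ) < (i : ℕ)) by omega), if_pos hij]
          rw [Tfun, h1, h2, h3, hj']
        · push_neg at hij
          have hiw' : (i : ℕ) + 1 < w.length := by omega
          have h1 : (w.eraseIdx (j : ℕ)).eraseIdx (i : ℕ) = del2 w (j : ℕ) ((i : ℕ) + 1) := by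
            rw [del2, Nat.max_eq_right (show (j : ℕ) ≤ (i : ℕ) + 1 by omega),
              Nat.min_eq_left (show (j : ℕ) ≤ (i : ℕ) + 1 by omega),
              eraseIdx_eraseIdx w _ _ hij]
          have h2 : (w.eraseIdx (j : ℕ)).get i = (w[(i : ℕ) + 1]?).getD a := by
            rw [List.get_eq_getElem, getElem_eraseIdx_of_ge w _ _ hij hiw hiw',
              List.getElem?_eq_getElem hiw']
            rfl
          have h3 : (-1 : R) ^ ((j : ℕ) + (i : ℕ)) = sgn R (j : ℕ) ((i : ℕ) + 1) := by
            rw [sgn, if_pos (show (j : ℕ) < (i : ℕ) + 1 by omega)]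
            rw [show (j : ℕ) + ((i : ℕ) + 1) = ((j : ℕ) + (i : ℕ)) + 1 by omega, pow_succ]
            ring
          rw [if_neg (show ¬ ((i : ℕ) < (j : ℕ)) by omega), Tfun, h1, h2, h3, hj']
      rw [Finset.sum_congr rfl fun i _ => hterm i]
      rw [Fin.sum_univ_eq_sum_range
        (fun i => Tfun R u v a w m (j : ℕ) (if i < (j : ℕ) then i else i + 1)), hlen,
        ← Fin.sum_univ_eq_sum_range
        (fun i => Tfun R u v a w m (j : ℕ) (if i < (j : ℕ) then i else i + 1))]
      have hsa : ∀ i : Fin t.length,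
          Tfun R u v a w m (j : ℕ) (if (i : ℕ) < (j : ℕ) then (i : ℕ) else (i : ℕ) + 1)
            = Tfun R u v a w m (j : ℕ) ((j.succAbove i : ℕ)) := by
        intro i
        rw [val_succAbove]
      rw [Finset.sum_congr rfl fun i _ => hsa i]
      have hdec := Fin.sum_univ_succAbove
        (fun q : Fin (t.length + 1) => Tfun R u v a w m (j : ℕ) (q : ℕ)) j
      rw [show (∑ q : Fin w.length, Tfun R u v a w m (j : ℕ) (q : ℕ))
            = ∑ q : Fin (t.length + 1), Tfun R u v a w m (j : ℕ) (q : ℕ) from rfl, hdec]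
      have hTjj : Tfun R u v a w m (j : ℕ) (j : ℕ) = 0 := by
        rw [Tfun, sgn_self, Finsupp.single_zero]
      rw [hTjj, zero_add]
    rw [step1, Fintype.sum_prod_type]
    refine Finset.sum_congr rfl fun j _ => Finset.sum_congr rfl fun q _ => ?_
    rw [Tfun]
    rw [show (w[(j : ℕ)]?).getD a = w.get j by rw [List.getElem?_eq_getElem j.isLt]; rfl,
      show (w[(q : ℕ)]?).getD a = w.get q by rw [List.getElem?_eq_getElem q.isLt]; rfl]

lemma sq_single
    (u : α → Multiset α × Multiset α → Multiset α × Multiset α)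
    (hu : ∀ x y m, u x (u y m) = u y (u x m))
    (du : ((List α × Multiset α × Multiset α) →₀ R) →ₗ[R]
      ((List α × Multiset α × Multiset α) →₀ R))
    (hdu : ∀ s : List α × Multiset α × Multiset α,
      du (Finsupp.single s 1) =
        ∑ j : Fin s.1.length,
          Finsupp.single (s.1.eraseIdx j, u (s.1.get j) s.2) ((-1 : R) ^ (j : ℕ)))
    (s : List α × Multiset α × Multiset α) :
    du (du (Finsupp.single s 1)) = 0 := by
  obtain ⟨w, m⟩ := s
  rw [comp_single u u du du hdu hdu w m]
  refine Finset.sum_ninvolution Prod.swap (fun p => ?_) (fun p hp => ?_)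
    (fun _ => Finset.mem_univ _) Prod.swap_swap
  · simp only [Prod.fst_swap, Prod.snd_swap]
    rw [del2_comm w p.2 p.1, hu (w.get p.1) (w.get p.2) m, ← Finsupp.single_add,
      sgn_add_swap, Finsupp.single_zero]
  · intro he
    apply hp
    have h12 : (p.2 : ℕ) = (p.1 : ℕ) := by
      have := congrArg (fun q : Fin w.length × Fin w.length => (q.1 : ℕ)) he
      simpa using this
    rw [h12, sgn_self, Finsupp.single_zero]

lemma anticomm_single
    (u v : α → Multiset α × Multiset α → Multiset α × Multiset α)
    (huv : ∀ x y m, u x (v y m) = v y (u x m))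
    (du dv : ((List α × Multiset α × Multiset α) →₀ R) →ₗ[R]
      ((List α × Multiset α × Multiset α) →₀ R))
    (hdu : ∀ s : List α × Multiset α × Multiset α,
      du (Finsupp.single s 1) =
        ∑ j : Fin s.1.length,
          Finsupp.single (s.1.eraseIdx j, u (s.1.get j) s.2) ((-1 : R) ^ (j : ℕ)))
    (hdv : ∀ s : List α × Multiset α × Multiset α,
      dv (Finsupp.single s 1) =
        ∑ j : Fin s.1.length,
          Finsupp.single (s.1.eraseIdx j, v (s.1.get j) s.2) ((-1 : R) ^ (j : ℕ)))
    (s : List α × Multiset α × Multiset α) :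
    du (dv (Finsupp.single s 1)) + dv (du (Finsupp.single s 1)) = 0 := by
  obtain ⟨w, m⟩ := s
  rw [comp_single u v du dv hdu hdv w m, comp_single v u dv du hdv hdu w m]
  have hsw : (∑ p : Fin w.length × Fin w.length,
      Finsupp.single (del2 w p.1 p.2, v (w.get p.2) (u (w.get p.1) m)) (sgn R p.1 p.2))
      = ∑ p : Fin w.length × Fin w.length,
      Finsupp.single (del2 w p.2 p.1, v (w.get p.1) (u (w.get p.2) m)) (sgn R p.2 p.1) := by
    refine Fintype.sum_equiv (Equiv.prodComm _ _) _ _ fun p => ?_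
    rfl
  rw [hsw, ← Finset.sum_add_distrib]
  rw [Finset.sum_congr rfl (fun p _ => ?_), Finset.sum_const_zero]
  rw [del2_comm w p.2 p.1, ← huv (w.get p.2) (w.get p.1) m, ← Finsupp.single_add,
    sgn_add_swap, Finsupp.single_zero]


end
end CubicalAux

open CubicalAux in
/-- The total differential `d = d₀ + d₁` of the cubical chain complex squares to zero;
equivalently (given `d₀² = 0 = d₁²`), the two boundary maps anticommute:
`d₀ ∘ d₁ + d₁ ∘ d₀ = 0`. A basis element `(w, A, B)` records the ordered list `w` of
remaining forest edges, the multiset `A` of removed edges and the multiset `B` of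
contracted edges; `d₀` removes and `d₁` contracts the `j`-th edge of `w`, each with
sign `(-1)^j`. -/
theorem cubical_total_differential_squared
    (α : Type*) (R : Type*) [CommRing R]
    (d₀ d₁ : ((List α × Multiset α × Multiset α) →₀ R) →ₗ[R]
      ((List α × Multiset α × Multiset α) →₀ R))
    (hd₀ : ∀ s : List α × Multiset α × Multiset α,
      d₀ (Finsupp.single s 1) =
        ∑ j : Fin s.1.length,
          Finsupp.single (s.1.eraseIdx j, s.2.1 + {s.1.get j}, s.2.2) ((-1 : R) ^ (j : ℕ)))
    (hd₁ : ∀ s : List α × Multiset α × Multiset α,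
      d₁ (Finsupp.single s 1) =
        ∑ j : Fin s.1.length,
          Finsupp.single (s.1.eraseIdx j, s.2.1, s.2.2 + {s.1.get j}) ((-1 : R) ^ (j : ℕ))) :
    (d₀ + d₁) ∘ₗ (d₀ + d₁) = 0 ∧ d₀ ∘ₗ d₁ + d₁ ∘ₗ d₀ = 0 := by
  classical
  set u₀ : α → Multiset α × Multiset α → Multiset α × Multiset α :=
    fun x m => (m.1 + {x}, m.2) with hu₀
  set u₁ : α → Multiset α × Multiset α → Multiset α × Multiset α :=
    fun x m => (m.1, m.2 + {x}) with hu₁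
  have hd₀' : ∀ s : List α × Multiset α × Multiset α,
      d₀ (Finsupp.single s 1) =
        ∑ j : Fin s.1.length,
          Finsupp.single (s.1.eraseIdx j, u₀ (s.1.get j) s.2) ((-1 : R) ^ (j : ℕ)) :=
    fun s => hd₀ s
  have hd₁' : ∀ s : List α × Multiset α × Multiset α,
      d₁ (Finsupp.single s 1) =
        ∑ j : Fin s.1.length,
          Finsupp.single (s.1.eraseIdx j, u₁ (s.1.get j) s.2) ((-1 : R) ^ (j : ℕ)) :=
    fun s => hd₁ s
  have h00 : ∀ (x y : α) (m : Multiset α × Multiset α), u₀ x (u₀ y m) = u₀ y (u₀ x m) := by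
    intro x y m
    show (m.1 + {y} + {x}, m.2) = (m.1 + {x} + {y}, m.2)
    rw [add_right_comm]
  have h11 : ∀ (x y : α) (m : Multiset α × Multiset α), u₁ x (u₁ y m) = u₁ y (u₁ x m) := by
    intro x y m
    show (m.1, m.2 + {y} + {x}) = (m.1, m.2 + {x} + {y})
    rw [add_right_comm]
  have h01 : ∀ (x y : α) (m : Multiset α × Multiset α), u₀ x (u₁ y m) = u₁ y (u₀ x m) := by
    intro x y m
    rfl
  have part2 : d₀ ∘ₗ d₁ + d₁ ∘ₗ d₀ = 0 := by
    refine Finsupp.lhom_ext fun s b => ?_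
    have hb : (Finsupp.single s b : (List α × Multiset α × Multiset α) →₀ R)
        = b • Finsupp.single s 1 := by
      rw [Finsupp.smul_single', mul_one]
    simp only [LinearMap.zero_apply, LinearMap.add_apply, LinearMap.comp_apply]
    rw [hb]
    simp only [map_smul]
    rw [← smul_add, anticomm_single u₀ u₁ h01 d₀ d₁ hd₀' hd₁' s, smul_zero]
  refine ⟨?_, part2⟩
  refine Finsupp.lhom_ext fun s b => ?_
  have hb : (Finsupp.single s b : (List α × Multiset α × Multiset α) →₀ R)
      = b • Finsupp.single s 1 := by
    rw [Finsupp.smul_single', mul_one]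
  have hz : ((d₀ + d₁) ∘ₗ (d₀ + d₁)) (Finsupp.single s 1) = 0 := by
    rw [LinearMap.comp_apply, LinearMap.add_apply, LinearMap.add_apply, map_add, map_add]
    have hac := anticomm_single u₀ u₁ h01 d₀ d₁ hd₀' hd₁' s
    calc d₀ (d₀ (Finsupp.single s 1)) + d₀ (d₁ (Finsupp.single s 1)) +
          (d₁ (d₀ (Finsupp.single s 1)) + d₁ (d₁ (Finsupp.single s 1)))
        = d₀ (d₀ (Finsupp.single s 1)) + d₁ (d₁ (Finsupp.single s 1)) +
          (d₀ (d₁ (Finsupp.single s 1)) + d₁ (d₀ (Finsupp.single s 1))) := by abel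
      _ = 0 := by
          rw [sq_single u₀ h00 d₀ hd₀' s, sq_single u₁ h11 d₁ hd₁' s, hac, zero_add, add_zero]
  simp only [LinearMap.zero_apply]
  rw [hb, map_smul, hz, smul_zero]
end
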